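/- Let G be a group, X a separable in probability stationary G-process, and let (Ĝ, τ, X̂) be any stochastically continuous extension of X. Then X is G-weakly mixing if and only if X̂ is Ĝ-weakly mixing. -/

import Mathlib

open MeasureTheory ProbabilityTheory Filter Topology symmDiff

noncomputable section

namespace Paper

variable {G : Type*} {Ω : Type*}

/-- The distribution of a `G`-process: the pushforward of `P` on `ℝ^G`. -/
def procLaw [MeasurableSpace Ω] (P : Measure Ω) (X : G → Ω → ℝ) : Measure (G → ℝ) :=
  Measure.map (fun ω g => X g ω) P

/-- The left translation `R_g` of `ℝ^G`, `R_g((x_h)_h) = (x_{g⁻¹ h})_h`. -/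
def shiftMap [Group G] (g : G) : (G → ℝ) → G → ℝ := fun x h => x (g⁻¹ * h)

/-- The (possibly non-invertible) right-style translation `Q_g((x_h)_h) = (x_{g h})_h`. -/
def transMap [Mul G] (g : G) : (G → ℝ) → G → ℝ := fun x h => x (g * h)

/-- (Left) stationarity of a `G`-process. -/
def Stationary [Mul G] [MeasurableSpace Ω] (P : Measure Ω) (X : G → Ω → ℝ) : Prop :=
  ∀ g : G, procLaw P (fun h => X (g * h)) = procLaw P X

/-- Ergodicity of a stationary `G`-process: every a.s. translation-invariant measurable set
in `ℝ^G` has law-measure `0` or `1`. -/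
def ErgodicProcess [Group G] [MeasurableSpace Ω] (P : Measure Ω) (X : G → Ω → ℝ) : Prop :=
  ∀ E : Set (G → ℝ), MeasurableSet E →
    (∀ g : G, procLaw P X ((shiftMap g ⁻¹' E) ∆ E) = 0) →
    procLaw P X E = 0 ∨ procLaw P X E = 1

/-- Weak mixing of a stationary `G`-process: the diagonal product system
`{R_g × R_g}` on `(ℝ^G × ℝ^G, ℙ_X ⊗ ℙ_X)` is ergodic. -/
def WeaklyMixingProcess [Group G] [MeasurableSpace Ω] (P : Measure Ω) (X : G → Ω → ℝ) : Prop :=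
  ∀ E : Set ((G → ℝ) × (G → ℝ)), MeasurableSet E →
    (∀ g : G, ((procLaw P X).prod (procLaw P X))
        (((fun p => (shiftMap g p.1, shiftMap g p.2)) ⁻¹' E) ∆ E) = 0) →
    ((procLaw P X).prod (procLaw P X)) E = 0 ∨ ((procLaw P X).prod (procLaw P X)) E = 1

/-- Separability in probability of a `G`-process. -/
def SeparableInProbability [MeasurableSpace Ω] (P : Measure Ω) (X : G → Ω → ℝ) : Prop :=
  ∃ S : Set G, S.Countable ∧
    ∀ g : G, ∃ s : ℕ → G, (∀ n, s n ∈ S) ∧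
      TendstoInMeasure P (fun n => X (s n)) atTop (X g)

/-- The finite dimensional distribution of the process along `gs : Fin n → G`. -/
def fdd [MeasurableSpace Ω] (P : Measure Ω) (X : G → Ω → ℝ) {n : ℕ} (gs : Fin n → G) :
    Measure (Fin n → ℝ) :=
  Measure.map (fun ω i => X (gs i) ω) P

/-- A measure on `ℝⁿ` is infinitely divisible if for every `m` it is the `m`-fold
convolution power of some probability measure. -/
def InfinitelyDivisible {n : ℕ} (μ : Measure (Fin n → ℝ)) : Prop :=
  ∀ m : ℕ, 0 < m → ∃ ν : Measure (Fin n → ℝ), IsProbabilityMeasure ν ∧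
    μ = Measure.map (fun x : Fin m → Fin n → ℝ => ∑ i, x i) (Measure.pi fun _ => ν)

/-- A `G`-process is infinitely divisible if all its finite dimensional
distributions are infinitely divisible. -/
def InfinitelyDivisibleProcess [MeasurableSpace Ω] (P : Measure Ω) (X : G → Ω → ℝ) : Prop :=
  ∀ (n : ℕ) (gs : Fin n → G), InfinitelyDivisible (fdd P X gs)

/-- Stochastic continuity of a process indexed by a topological group (or semigroup). -/
def StochasticallyContinuous [TopologicalSpace G] [MeasurableSpace Ω]
    (P : Measure Ω) (X : G → Ω → ℝ) : Prop :=
  ∀ g₀ : G, TendstoInMeasure P X (𝓝 g₀) (X g₀)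

/-- All finite dimensional characteristic functions of the process are nowhere vanishing. -/
def CharFunNonVanishing [MeasurableSpace Ω] (P : Measure Ω) (X : G → Ω → ℝ) : Prop :=
  ∀ (n : ℕ) (gs : Fin n → G) (t : Fin n → ℝ),
    (∫ x, Complex.exp (Complex.I * ((∑ i, t i * x i : ℝ) : ℂ)) ∂(fdd P X gs)) ≠ 0

/-- A measure on `ℝⁿ` is a (possibly degenerate) Gaussian measure iff each of its
one-dimensional linear-functional pushforwards is a real Gaussian. -/
def IsGaussianMeasure {n : ℕ} (μ : Measure (Fin n → ℝ)) : Prop :=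
  ∀ t : Fin n → ℝ, ∃ (m : ℝ) (v : NNReal),
    Measure.map (fun x => ∑ i, t i * x i) μ = gaussianReal m v

/-- A Gaussian `G`-process: all finite dimensional distributions are
(possibly degenerate) Gaussian. -/
def GaussianProcess [MeasurableSpace Ω] (P : Measure Ω) (X : G → Ω → ℝ) : Prop :=
  ∀ (n : ℕ) (gs : Fin n → G), IsGaussianMeasure (fdd P X gs)

/-- Ergodicity of a probability preserving `Θ`-system (maps need not be invertible). -/
def ErgodicSystem {Θ 𝕏 : Type*} [MeasurableSpace 𝕏] (ξ : Measure 𝕏) (T : Θ → 𝕏 → 𝕏) : Prop :=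
  ∀ A : Set 𝕏, MeasurableSet A → (∀ θ : Θ, ξ ((T θ ⁻¹' A) ∆ A) = 0) →
    ξ A = 0 ∨ ξ A = 1

/-- A probability preserving automorphism: a bi-measurable measure-preserving bijection
between full-measure measurable subsets. -/
def IsPPAutomorphism [MeasurableSpace Ω] (P : Measure Ω) (T : Ω → Ω) : Prop :=
  Measurable T ∧ (∀ A : Set Ω, MeasurableSet A → P (T ⁻¹' A) = P A) ∧
  ∃ (A B : Set Ω) (σ : Ω → Ω), MeasurableSet A ∧ MeasurableSet B ∧
    P A = 1 ∧ P B = 1 ∧ Measurable σ ∧ Set.MapsTo T A B ∧ Set.MapsTo σ B A ∧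
    Set.InvOn σ T A B

/-!
Restricting paths along `τ` maps `ℝ^Ĝ` to `ℝ^G`, pushes the law `ν` of `X̂` to the law of `X`,
and intertwines the diagonal shift by `τ g` on `ℝ^Ĝ × ℝ^Ĝ` with the diagonal shift by `g`.
Stochastic continuity of `X̂` gives two facts about `ν ⊗ ν`:
* the shifts act continuously in measure, `(ν ⊗ ν) (R_k⁻¹ A ∆ A) → 0` as `k → 1`: first for
  `A = {x_h < q}` with `q` not an atom of `x_h`, then for all measurable `A` by approximation.
  Hence a set invariant under the dense subgroup `τ G` is invariant under all of `Ĝ`;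
* each coordinate `x_h` is an a.e. limit of coordinates `x_{τ g_n}`, so every measurable set is
  a.e. equal to the preimage of a measurable set under the restriction.
So the restriction identifies the invariant sets on both sides, with their measures.
-/

open scoped ENNReal

section AsymptoticInvariance

variable {α ι : Type*} {mα : MeasurableSpace α} {κ : Measure α} {S : ι → α → α} {l : Filter ι}

lemma measure_preimage_symmDiff_le {T : α → α} (hT : MeasurePreserving T κ κ) {A B : Set α}
    (hA : MeasurableSet A) (hB : MeasurableSet B) :
    κ ((T ⁻¹' A) ∆ A) ≤ κ (A ∆ B) + κ ((T ⁻¹' B) ∆ B) + κ (A ∆ B) :=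
  calc κ ((T ⁻¹' A) ∆ A) ≤ κ ((T ⁻¹' A) ∆ (T ⁻¹' B)) + (κ ((T ⁻¹' B) ∆ B) + κ (B ∆ A)) :=
        (measure_symmDiff_le _ _ _).trans (add_le_add_right (measure_symmDiff_le _ _ _) _)
    _ = κ (A ∆ B) + κ ((T ⁻¹' B) ∆ B) + κ (A ∆ B) := by
        rw [← Set.preimage_symmDiff, hT.measure_preimage (hA.symmDiff hB).nullMeasurableSet,
          symmDiff_comm B, add_assoc]

lemma tendsto_measure_preimage_symmDiff_of_approx (hS : ∀ i, MeasurePreserving (S i) κ κ)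
    {A : Set α} (hA : MeasurableSet A)
    (happrox : ∀ ε > 0, ∃ B, MeasurableSet B ∧ κ (A ∆ B) ≤ ε ∧
      Tendsto (fun i => κ ((S i ⁻¹' B) ∆ B)) l (𝓝 0)) :
    Tendsto (fun i => κ ((S i ⁻¹' A) ∆ A)) l (𝓝 0) := by
  refine ENNReal.tendsto_nhds_zero.2 fun ε hε => ?_
  obtain ⟨B, hB, hAB, hBinv⟩ := happrox (ε / 2 / 2) (ENNReal.half_pos (ENNReal.half_pos hε.ne').ne')
  filter_upwards [ENNReal.tendsto_nhds_zero.1 hBinv (ε / 2) (ENNReal.half_pos hε.ne')] with i hi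
  calc κ ((S i ⁻¹' A) ∆ A) ≤ κ (A ∆ B) + κ ((S i ⁻¹' B) ∆ B) + κ (A ∆ B) :=
        measure_preimage_symmDiff_le (hS i) hA hB
    _ ≤ ε / 2 / 2 + ε / 2 + ε / 2 / 2 := by gcongr
    _ = ε := by rw [add_right_comm, ENNReal.add_halves, ENNReal.add_halves]

lemma tendsto_measure_preimage_symmDiff_union {A B : Set α}
    (hA : Tendsto (fun i => κ ((S i ⁻¹' A) ∆ A)) l (𝓝 0))
    (hB : Tendsto (fun i => κ ((S i ⁻¹' B) ∆ B)) l (𝓝 0)) :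
    Tendsto (fun i => κ ((S i ⁻¹' (A ∪ B)) ∆ (A ∪ B))) l (𝓝 0) := by
  refine tendsto_of_tendsto_of_tendsto_of_le_of_le tendsto_const_nhds (by simpa using hA.add hB)
    (fun _ => zero_le) fun i => ?_
  rw [Set.preimage_union]
  exact (measure_mono Set.union_symmDiff_union_subset).trans (measure_union_le _ _)

lemma tendsto_measure_preimage_symmDiff_of_generateFrom [IsFiniteMeasure κ]
    (hS : ∀ i, MeasurePreserving (S i) κ κ) {C : Set (Set α)} (hgen : mα = .generateFrom C)
    (hC : ∀ A ∈ C, Tendsto (fun i => κ ((S i ⁻¹' A) ∆ A)) l (𝓝 0)) {A : Set α}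
    (hA : MeasurableSet A) : Tendsto (fun i => κ ((S i ⁻¹' A) ∆ A)) l (𝓝 0) := by
  rw [hgen] at hA
  induction A, hA using MeasurableSpace.generateFrom_induction with
  | hC A hA => exact hC A hA
  | empty => simpa using tendsto_const_nhds
  | compl A _ ih => simpa only [Set.preimage_compl, compl_symmDiff_compl] using ih
  | iUnion f hf ih =>
    have hfm : ∀ n, MeasurableSet (f n) := fun n => hgen ▸ hf n
    have hacc : ∀ N, Tendsto (fun i => κ ((S i ⁻¹' Set.accumulate f N) ∆ Set.accumulate f N)) l
        (𝓝 0) := by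
      intro N
      induction N with
      | zero => simpa [Set.accumulate_zero_nat] using ih 0
      | succ N ihN =>
        rw [Set.accumulate_succ]
        exact tendsto_measure_preimage_symmDiff_union ihN (ih (N + 1))
    have hrem : Tendsto (fun N => κ ((⋃ n, f n) \ Set.accumulate f N)) atTop (𝓝 0) := by
      have := tendsto_measure_iInter_atTop (μ := κ)
        (s := fun N => (⋃ n, f n) \ Set.accumulate f N)
        (fun N => ((MeasurableSet.iUnion hfm).diff
          (MeasurableSet.biUnion (Set.to_countable _) fun n _ => hfm n)).nullMeasurableSet)
        (fun N M hNM => Set.sdiff_subset_sdiff_right (Set.monotone_accumulate hNM))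
        ⟨0, measure_ne_top _ _⟩
      rwa [← Set.sdiff_iUnion, Set.iUnion_accumulate, Set.sdiff_self, measure_empty] at this
    refine tendsto_measure_preimage_symmDiff_of_approx hS (.iUnion hfm) fun ε hε => ?_
    obtain ⟨N, hN⟩ := (ENNReal.tendsto_nhds_zero.1 hrem ε hε).exists
    refine ⟨Set.accumulate f N, MeasurableSet.biUnion (Set.to_countable _) fun n _ => hfm n,
      ?_, hacc N⟩
    rwa [symmDiff_of_ge (Set.accumulate_subset_iUnion N)]

end AsymptoticInvariance

section Thresholds

variable {α ι : Type*} [MeasurableSpace α] {κ : Measure α} [IsFiniteMeasure κ] {l : Filter ι}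

lemma tendsto_measure_setOf_lt_symmDiff {Zn : ι → α → ℝ} {Z : α → ℝ} (hZ : Measurable Z)
    (hconv : TendstoInMeasure κ Zn l Z) {a : ℝ} (ha : κ {x | Z x = a} = 0) :
    Tendsto (fun i => κ ({x | Zn i x < a} ∆ {x | Z x < a})) l (𝓝 0) := by
  have hnear : Tendsto (fun δ => κ (Z ⁻¹' Set.Icc (a - δ) (a + δ))) (𝓝[>] 0) (𝓝 0) := by
    have := tendsto_measure_Icc_nhdsWithin_right' (κ.map Z) a
    simp only [Measure.map_apply hZ measurableSet_Icc,
      Measure.map_apply hZ (measurableSet_singleton a)] at this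
    exact ha ▸ this
  refine ENNReal.tendsto_nhds_zero.2 fun ε hε => ?_
  obtain ⟨δ, hδε, hδ⟩ := ((ENNReal.tendsto_nhds_zero.1 hnear _ (ENNReal.half_pos hε.ne')).and
    self_mem_nhdsWithin).exists
  filter_upwards [ENNReal.tendsto_nhds_zero.1 (tendstoInMeasure_iff_dist.1 hconv δ hδ) _
    (ENNReal.half_pos hε.ne')] with i hi
  have hsub : {x | Zn i x < a} ∆ {x | Z x < a} ⊆
      {x | δ ≤ dist (Zn i x) (Z x)} ∪ Z ⁻¹' Set.Icc (a - δ) (a + δ) := by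
    intro x hx
    rw [Set.mem_symmDiff] at hx
    simp only [Set.mem_union, Set.mem_ofPred_eq, Set.mem_preimage, Set.mem_Icc, Real.dist_eq,
      le_abs, not_lt] at hx ⊢
    by_contra! h
    obtain ⟨⟨h1, h2⟩, h3⟩ := h
    rcases hx with ⟨h4, h5⟩ | ⟨h4, h5⟩ <;> linarith [h3 (by linarith)]
  calc κ ({x | Zn i x < a} ∆ {x | Z x < a})
      ≤ κ {x | δ ≤ dist (Zn i x) (Z x)} + κ (Z ⁻¹' Set.Icc (a - δ) (a + δ)) :=
        (measure_mono hsub).trans (measure_union_le _ _)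
    _ ≤ ε / 2 + ε / 2 := add_le_add hi hδε
    _ = ε := ENNReal.add_halves ε

lemma exists_lt_measure_preimage_Ico_le {Z : α → ℝ} (hZ : Measurable Z) (q : ℝ)
    {ε : ℝ≥0∞} (hε : 0 < ε) : ∃ a < q, κ (Z ⁻¹' Set.Ico a q) ≤ ε := by
  have hempty : (⋂ r > (0 : ℝ), Set.Ico (q - r) q) = ∅ := by
    refine Set.eq_empty_of_forall_notMem fun x hx => ?_
    simp only [Set.mem_iInter, Set.mem_Ico] at hx
    have hxq := (hx 1 one_pos).2
    linarith [(hx ((q - x) / 2) (by linarith)).1]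
  have := tendsto_measure_biInter_gt (μ := κ.map Z) (s := fun r => Set.Ico (q - r) q) (a := 0)
    (fun _ _ => measurableSet_Ico.nullMeasurableSet)
    (fun r s _ hrs => Set.Ico_subset_Ico_left (by linarith))
    ⟨1, one_pos, measure_ne_top (κ.map Z) _⟩
  rw [hempty, measure_empty] at this
  obtain ⟨r, hr, hrpos⟩ := ((ENNReal.tendsto_nhds_zero.1 this ε hε).and self_mem_nhdsWithin).exists
  refine ⟨q - r, by linarith [show (0 : ℝ) < r from hrpos], ?_⟩
  rwa [← Measure.map_apply hZ measurableSet_Ico]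

lemma tendsto_measure_preimage_symmDiff_setOf_lt {S : ι → α → α}
    (hS : ∀ i, MeasurePreserving (S i) κ κ) {Z : α → ℝ} (hZ : Measurable Z)
    (hconv : TendstoInMeasure κ (fun i => Z ∘ S i) l Z) (q : ℝ) :
    Tendsto (fun i => κ ((S i ⁻¹' {x | Z x < q}) ∆ {x | Z x < q})) l (𝓝 0) := by
  refine tendsto_measure_preimage_symmDiff_of_approx hS (measurableSet_lt hZ measurable_const)
    fun ε hε => ?_
  obtain ⟨a₀, ha₀q, ha₀⟩ := exists_lt_measure_preimage_Ico_le (κ := κ) hZ q hε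
  -- `Z` has countably many atoms, so there is a threshold in `(a₀, q)` which is not one
  obtain ⟨a, hatom, ha₀a, haq⟩ :=
    ((Measure.countable_meas_level_set_pos (μ := κ) hZ).dense_compl ℝ).exists_between ha₀q
  refine ⟨{x | Z x < a}, measurableSet_lt hZ measurable_const, ?_, ?_⟩
  · rw [symmDiff_of_ge (show {x | Z x < a} ⊆ {x | Z x < q} from fun x hx => lt_trans hx haq)]
    refine (measure_mono fun x (hx : Z x < q ∧ ¬ Z x < a) => ?_).trans ha₀
    exact ⟨ha₀a.le.trans (not_lt.1 hx.2), hx.1⟩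
  · exact tendsto_measure_setOf_lt_symmDiff hZ hconv (nonpos_iff_eq_zero.1 (not_lt.1 hatom))

end Thresholds

section GeneratingFunctions

variable {α J : Type*} {mα : MeasurableSpace α} {κ : Measure α}

lemma iSup_comap_eq_generateFrom_preimage_Iio (Z : J → α → ℝ) :
    ⨆ j, MeasurableSpace.comap (Z j) Real.measurableSpace =
      .generateFrom {A | ∃ j q, Z j ⁻¹' Set.Iio q = A} := by
  simp_rw [BorelSpace.measurable_eq (α := ℝ), borel_eq_generateFrom_Iio,
    MeasurableSpace.comap_generateFrom, MeasurableSpace.iSup_generateFrom]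
  congr 1
  ext A
  simp

theorem tendsto_measure_preimage_symmDiff_of_tendstoInMeasure [IsFiniteMeasure κ] {ι : Type*}
    {l : Filter ι} {S : ι → α → α} {Z : J → α → ℝ}
    (hgen : mα = ⨆ j, MeasurableSpace.comap (Z j) Real.measurableSpace)
    (hS : ∀ i, MeasurePreserving (S i) κ κ)
    (hconv : ∀ j, TendstoInMeasure κ (fun i => Z j ∘ S i) l (Z j)) {A : Set α}
    (hA : MeasurableSet A) : Tendsto (fun i => κ ((S i ⁻¹' A) ∆ A)) l (𝓝 0) := by
  have hZ (j : J) : Measurable (Z j) :=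
    measurable_iff_comap_le.2 ((le_iSup (fun j => MeasurableSpace.comap (Z j) _) j).trans hgen.ge)
  refine tendsto_measure_preimage_symmDiff_of_generateFrom hS
    (hgen.trans (iSup_comap_eq_generateFrom_preimage_Iio Z)) ?_ hA
  rintro _ ⟨j, q, rfl⟩
  exact tendsto_measure_preimage_symmDiff_setOf_lt hS (hZ j) (hconv j) q

theorem exists_measurableSet_ae_eq_preimage {β : Type*} [MeasurableSpace β] {Q : α → β}
    {Z : J → α → ℝ} (hgen : mα = ⨆ j, MeasurableSpace.comap (Z j) Real.measurableSpace)
    (hZ : ∀ j, ∃ ψ : β → ℝ, Measurable ψ ∧ Z j =ᵐ[κ] ψ ∘ Q) {A : Set α}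
    (hA : MeasurableSet A) : ∃ E, MeasurableSet E ∧ A =ᵐ[κ] Q ⁻¹' E := by
  rw [hgen, iSup_comap_eq_generateFrom_preimage_Iio] at hA
  induction A, hA using MeasurableSpace.generateFrom_induction with
  | hC A hA =>
    obtain ⟨j, q, rfl⟩ := hA
    obtain ⟨ψ, hψ, hZψ⟩ := hZ j
    exact ⟨ψ ⁻¹' Set.Iio q, hψ measurableSet_Iio, hZψ.preimage _⟩
  | empty => exact ⟨∅, .empty, by rw [Set.preimage_empty]; rfl⟩
  | compl A _ ih =>
    obtain ⟨E, hE, hAE⟩ := ih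
    exact ⟨Eᶜ, hE.compl, hAE.compl⟩
  | iUnion f _ ih =>
    choose E hE hfE using ih
    exact ⟨⋃ n, E n, .iUnion hE, by rw [Set.preimage_iUnion]; exact .countable_iUnion hfE⟩

lemma exists_ae_eq_comp_of_tendstoInMeasure {β ι : Type*} [MeasurableSpace β] {l : Filter ι}
    [l.NeBot] [l.IsCountablyGenerated] {Q : α → β} {φ : ι → β → ℝ} (hφ : ∀ i, Measurable (φ i))
    {Z : α → ℝ} (hconv : TendstoInMeasure κ (fun i => φ i ∘ Q) l Z) :
    ∃ ψ : β → ℝ, Measurable ψ ∧ Z =ᵐ[κ] ψ ∘ Q := by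
  obtain ⟨u, hu⟩ := exists_seq_tendsto l
  obtain ⟨ns, -, hae⟩ := (hconv.comp hu).exists_seq_tendsto_ae
  refine ⟨fun y => liminf (fun n => φ (u (ns n)) y) atTop, .liminf fun n => hφ _, ?_⟩
  filter_upwards [hae] with x hx
  exact hx.liminf_eq.symm

lemma _root_.MeasureTheory.MeasurePreserving.tendstoInMeasure_comp_iff {α β ι : Type*}
    [MeasurableSpace α] [MeasurableSpace β] {μ : Measure α} {ν : Measure β} {Φ : α → β}
    (hΦ : MeasurePreserving Φ μ ν) {l : Filter ι} {f : ι → β → ℝ} {g : β → ℝ}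
    (hf : ∀ i, Measurable (f i)) (hg : Measurable g) :
    TendstoInMeasure μ (fun i => f i ∘ Φ) l (g ∘ Φ) ↔ TendstoInMeasure ν f l g := by
  simp only [tendstoInMeasure_iff_dist]
  refine forall₂_congr fun ε _ => ?_
  have (i : ι) : μ {x | ε ≤ dist (f i (Φ x)) (g (Φ x))} = ν {y | ε ≤ dist (f i y) (g y)} :=
    hΦ.measure_preimage (measurableSet_le measurable_const ((hf i).dist hg)).nullMeasurableSet
  simp only [Function.comp_apply, this]

end GeneratingFunctions

lemma _root_.DenseRange.comap_nhds_neBot {Θ H : Type*} [TopologicalSpace H] {τ : Θ → H}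
    (hτ : DenseRange τ) (h : H) : (comap τ (𝓝 h)).NeBot :=
  comap_neBot_iff_frequently.2 (mem_closure_iff_frequently.1 (hτ h))

section ErgodicSystems

variable {Θ 𝕏 𝕐 : Type*} [MeasurableSpace 𝕏] [MeasurableSpace 𝕐] {ξ : Measure 𝕏}
  {T : Θ → 𝕏 → 𝕏} {S : Θ → 𝕐 → 𝕐} {Q : 𝕏 → 𝕐}

theorem ErgodicSystem.map (h : ErgodicSystem ξ T) (hQ : Measurable Q)
    (hS : ∀ θ, Measurable (S θ)) (hQTS : ∀ θ, Function.Semiconj Q (T θ) (S θ)) :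
    ErgodicSystem (ξ.map Q) S := by
  intro E hE hinv
  rw [Measure.map_apply hQ hE]
  refine h _ (hQ hE) fun θ => ?_
  rw [← Set.preimage_comp, (hQTS θ).comp_eq, Set.preimage_comp, ← Set.preimage_symmDiff,
    ← Measure.map_apply hQ ((hS θ hE).symmDiff hE)]
  exact hinv θ

theorem ErgodicSystem.of_map (h : ErgodicSystem (ξ.map Q) S) (hQ : Measurable Q)
    (hS : ∀ θ, Measurable (S θ)) (hT : ∀ θ, Measure.QuasiMeasurePreserving (T θ) ξ ξ)
    (hQTS : ∀ θ, Function.Semiconj Q (T θ) (S θ))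
    (happrox : ∀ A, MeasurableSet A → ∃ E, MeasurableSet E ∧ A =ᵐ[ξ] Q ⁻¹' E) :
    ErgodicSystem ξ T := by
  intro A hA hinv
  obtain ⟨E, hE, hAE⟩ := happrox A hA
  rw [measure_congr hAE, ← Measure.map_apply hQ hE]
  refine h E hE fun θ => ?_
  rw [Measure.map_apply hQ ((hS θ hE).symmDiff hE), Set.preimage_symmDiff, ← Set.preimage_comp,
    ← (hQTS θ).comp_eq, Set.preimage_comp,
    ← measure_congr (((hT θ).preimage_ae_eq hAE).symmDiff hAE)]
  exact hinv θ

variable {H : Type*} [TopologicalSpace H] {R : H → 𝕏 → 𝕏}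

lemma measure_preimage_symmDiff_eq_zero_of_denseRange {τ : Θ → H} (hτ : DenseRange τ)
    {A : Set 𝕏} (hcont : ∀ h, Tendsto (fun k => ξ ((R k ⁻¹' A) ∆ (R h ⁻¹' A))) (𝓝 h) (𝓝 0))
    (hinv : ∀ θ, ξ ((R (τ θ) ⁻¹' A) ∆ A) = 0) (h : H) : ξ ((R h ⁻¹' A) ∆ A) = 0 := by
  have := DenseRange.comap_nhds_neBot hτ h
  refine le_antisymm (ge_of_tendsto ((hcont h).comp (tendsto_comap (f := τ)))
    (.of_forall fun θ => ?_)) zero_le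
  calc ξ ((R h ⁻¹' A) ∆ A)
      ≤ ξ ((R h ⁻¹' A) ∆ (R (τ θ) ⁻¹' A)) + ξ ((R (τ θ) ⁻¹' A) ∆ A) := measure_symmDiff_le _ _ _
    _ = ξ ((R (τ θ) ⁻¹' A) ∆ (R h ⁻¹' A)) := by rw [hinv, add_zero, symmDiff_comm]

theorem ergodicSystem_comp_iff_of_denseRange {τ : Θ → H} (hτ : DenseRange τ)
    (hcont : ∀ A, MeasurableSet A → ∀ h,
      Tendsto (fun k => ξ ((R k ⁻¹' A) ∆ (R h ⁻¹' A))) (𝓝 h) (𝓝 0)) :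
    ErgodicSystem ξ (fun θ => R (τ θ)) ↔ ErgodicSystem ξ R :=
  ⟨fun h A hA hinv => h A hA fun θ => hinv (τ θ), fun h A hA hinv =>
    h A hA (measure_preimage_symmDiff_eq_zero_of_denseRange hτ (hcont A hA) hinv)⟩

lemma tendsto_measure_preimage_symmDiff_nhds [Group H] [IsTopologicalGroup H]
    (hR : ∀ a b, R (a * b) = R a ∘ R b) (hRm : ∀ k, Measurable (R k))
    (hR1 : ∀ A, MeasurableSet A → Tendsto (fun k => ξ ((R k ⁻¹' A) ∆ A)) (𝓝 1) (𝓝 0))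
    {A : Set 𝕏} (hA : MeasurableSet A) (h : H) :
    Tendsto (fun k => ξ ((R k ⁻¹' A) ∆ (R h ⁻¹' A))) (𝓝 h) (𝓝 0) := by
  have hk : Tendsto (fun k => h⁻¹ * k) (𝓝 h) (𝓝 1) := by
    simpa using (continuous_const_mul h⁻¹).tendsto h
  refine ((hR1 _ (hRm h hA)).comp hk).congr fun k => ?_
  rw [Function.comp_apply, ← Set.preimage_comp, ← hR, mul_inv_cancel_left]

end ErgodicSystems

section Processes

variable {H : Type*} {Ω : Type*} [MeasurableSpace Ω] {P : Measure Ω} {Y : H → Ω → ℝ}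

lemma weaklyMixingProcess_iff [Group H] :
    WeaklyMixingProcess P Y ↔ ErgodicSystem ((procLaw P Y).prod (procLaw P Y))
      (fun g => Prod.map (shiftMap g) (shiftMap g)) :=
  Iff.rfl

lemma measurePreserving_procLaw (hY : ∀ h, Measurable (Y h)) :
    MeasurePreserving (fun ω h => Y h ω) P (procLaw P Y) :=
  ⟨measurable_pi_lambda _ hY, rfl⟩

lemma measurable_comp_right {G : Type*} (τ : G → H) : Measurable fun x : H → ℝ => x ∘ τ :=
  measurable_pi_lambda _ fun g => measurable_pi_apply (τ g)

lemma procLaw_comp (hY : ∀ h, Measurable (Y h)) {G : Type*} (τ : G → H) :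
    procLaw P (fun g => Y (τ g)) = (procLaw P Y).map fun x => x ∘ τ := by
  unfold procLaw
  rw [Measure.map_map (measurable_comp_right τ) (measurable_pi_lambda _ hY)]
  rfl

lemma measurable_shiftMap [Group H] (g : H) : Measurable (shiftMap g) :=
  measurable_pi_lambda _ fun _ => measurable_pi_apply _

lemma shiftMap_mul [Group H] (a b : H) : shiftMap (a * b) = shiftMap a ∘ shiftMap b := by
  funext x h
  simp [shiftMap, mul_assoc]

lemma shiftMap_comp_monoidHom [Group H] {G : Type*} [Group G] (τ : G →* H) (g : G)
    (x : H → ℝ) : shiftMap (τ g) x ∘ τ = shiftMap g (x ∘ τ) := by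
  funext g'
  simp [shiftMap]

lemma Stationary.measurePreserving_shiftMap [Group H] (hY : ∀ h, Measurable (Y h))
    (hstat : Stationary P Y) (g : H) :
    MeasurePreserving (shiftMap g) (procLaw P Y) (procLaw P Y) := by
  refine ⟨measurable_shiftMap g, ?_⟩
  rw [procLaw, Measure.map_map (measurable_shiftMap g) (measurable_pi_lambda _ hY)]
  exact hstat g⁻¹

lemma StochasticallyContinuous.procLaw [TopologicalSpace H] (hY : ∀ h, Measurable (Y h))
    (hcont : StochasticallyContinuous P Y) :
    StochasticallyContinuous (procLaw P Y) (fun h x => x h) := fun h =>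
  ((measurePreserving_procLaw hY).tendstoInMeasure_comp_iff (fun _ => measurable_pi_apply _)
    (measurable_pi_apply h)).1 (hcont h)

end Processes

section PairsOfPaths

variable {H : Type*}

-- `ℝ^H × ℝ^H` seen as `ℝ^(Bool × H)`, so that `μ ⊗ μ` is the law of a process on `Bool × H`.
def pairCoord (j : Bool × H) (p : (H → ℝ) × (H → ℝ)) : ℝ := cond j.1 p.1 p.2 j.2

lemma iSup_comap_pairCoord :
    ⨆ j, MeasurableSpace.comap (pairCoord (H := H) j) Real.measurableSpace =
      (inferInstance : MeasurableSpace ((H → ℝ) × (H → ℝ))) := by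
  simp only [iSup_prod, iSup_bool_eq]
  change _ = MeasurableSpace.comap Prod.fst MeasurableSpace.pi ⊔
    MeasurableSpace.comap Prod.snd MeasurableSpace.pi
  simp only [MeasurableSpace.pi, MeasurableSpace.comap_iSup, MeasurableSpace.comap_comp]
  rfl

lemma measurable_pairCoord (j : Bool × H) : Measurable (pairCoord j) := by
  obtain ⟨_ | _, h⟩ := j
  exacts [(measurable_pi_apply h).comp measurable_snd, (measurable_pi_apply h).comp measurable_fst]

lemma pairCoord_comp_prodMap_shiftMap [Group H] (j : Bool × H) (k : H) :
    pairCoord j ∘ Prod.map (shiftMap k) (shiftMap k) = pairCoord (j.1, k⁻¹ * j.2) := by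
  obtain ⟨_ | _, h⟩ := j <;> rfl

lemma pairCoord_comp_prodMap_comp {G : Type*} (τ : G → H) (j : Bool × G) :
    pairCoord j ∘ Prod.map (fun x : H → ℝ => x ∘ τ) (fun x => x ∘ τ) = pairCoord (j.1, τ j.2) := by
  obtain ⟨_ | _, g⟩ := j <;> rfl

variable [TopologicalSpace H] {μ : Measure (H → ℝ)} [IsProbabilityMeasure μ]

lemma StochasticallyContinuous.prod_pairCoord (hcont : StochasticallyContinuous μ (fun h x => x h))
    (b : Bool) : StochasticallyContinuous (μ.prod μ) (fun h => pairCoord (b, h)) := fun h => by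
  cases b
  · exact ((measurePreserving_snd (μ := μ) (ν := μ)).tendstoInMeasure_comp_iff (l := 𝓝 h)
      (f := fun h x => x h) (fun _ => measurable_pi_apply _) (measurable_pi_apply h)).2 (hcont h)
  · exact ((measurePreserving_fst (μ := μ) (ν := μ)).tendstoInMeasure_comp_iff (l := 𝓝 h)
      (f := fun h x => x h) (fun _ => measurable_pi_apply _) (measurable_pi_apply h)).2 (hcont h)

theorem tendsto_measure_preimage_prodMap_shiftMap_symmDiff [Group H] [IsTopologicalGroup H]
    (hstat : ∀ h, MeasurePreserving (shiftMap h) μ μ)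
    (hcont : StochasticallyContinuous μ (fun h x => x h)) {A : Set ((H → ℝ) × (H → ℝ))}
    (hA : MeasurableSet A) (h : H) :
    Tendsto (fun k => (μ.prod μ) ((Prod.map (shiftMap k) (shiftMap k) ⁻¹' A) ∆
      (Prod.map (shiftMap h) (shiftMap h) ⁻¹' A))) (𝓝 h) (𝓝 0) := by
  refine tendsto_measure_preimage_symmDiff_nhds (fun a b => ?_)
    (fun k => (measurable_shiftMap k).prodMap (measurable_shiftMap k)) (fun A hA => ?_) hA h
  · rw [shiftMap_mul, Prod.map_comp_map]
  refine tendsto_measure_preimage_symmDiff_of_tendstoInMeasure iSup_comap_pairCoord.symm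
    (fun k => (hstat k).prod (hstat k)) (fun ⟨b, h⟩ => ?_) hA
  have hk : Tendsto (fun k : H => k⁻¹ * h) (𝓝 1) (𝓝 h) :=
    (by fun_prop : Continuous fun k : H => k⁻¹ * h).tendsto' 1 h (by simp)
  simp only [pairCoord_comp_prodMap_shiftMap]
  exact (hcont.prod_pairCoord b h).comp hk

theorem exists_measurableSet_ae_eq_preimage_prodMap_comp [FirstCountableTopology H] {G : Type*}
    {τ : G → H} (hτ : DenseRange τ) (hcont : StochasticallyContinuous μ (fun h x => x h))
    {A : Set ((H → ℝ) × (H → ℝ))} (hA : MeasurableSet A) : ∃ E, MeasurableSet E ∧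
      A =ᵐ[μ.prod μ] Prod.map (fun x : H → ℝ => x ∘ τ) (fun x => x ∘ τ) ⁻¹' E := by
  refine exists_measurableSet_ae_eq_preimage iSup_comap_pairCoord.symm (fun ⟨b, h⟩ => ?_) hA
  have := DenseRange.comap_nhds_neBot hτ h
  refine exists_ae_eq_comp_of_tendstoInMeasure (l := comap τ (𝓝 h))
    (φ := fun g => pairCoord (b, g)) (fun g => measurable_pairCoord _) ?_
  simp only [pairCoord_comp_prodMap_comp]
  exact (hcont.prod_pairCoord b h).comp tendsto_comap

theorem ergodicSystem_map_prodMap_comp_iff [FirstCountableTopology H] [Group H] {G : Type*}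
    [Group G] (τ : G →* H) (hτ : DenseRange τ) (hstat : ∀ h, MeasurePreserving (shiftMap h) μ μ)
    (hcont : StochasticallyContinuous μ (fun h x => x h)) :
    ErgodicSystem ((μ.prod μ).map (Prod.map (fun x : H → ℝ => x ∘ τ) (fun x => x ∘ τ)))
        (fun g => Prod.map (shiftMap g) (shiftMap g)) ↔
      ErgodicSystem (μ.prod μ) (fun g => Prod.map (shiftMap (τ g)) (shiftMap (τ g))) := by
  have hQ := (measurable_comp_right τ).prodMap (measurable_comp_right τ)
  have hS (g : G) := (measurable_shiftMap g).prodMap (measurable_shiftMap g)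
  have hQTS (g : G) : Function.Semiconj (Prod.map (fun x : H → ℝ => x ∘ τ) (fun x => x ∘ τ))
      (Prod.map (shiftMap (τ g)) (shiftMap (τ g))) (Prod.map (shiftMap g) (shiftMap g)) :=
    fun p => Prod.ext (shiftMap_comp_monoidHom τ g p.1) (shiftMap_comp_monoidHom τ g p.2)
  exact ⟨fun h => h.of_map hQ hS
    (fun g => ((hstat (τ g)).prod (hstat (τ g))).quasiMeasurePreserving) hQTS
    fun A hA => exists_measurableSet_ae_eq_preimage_prodMap_comp hτ hcont hA,
    fun h => h.map hQ hS hQTS⟩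

end PairsOfPaths

theorem weaklyMixing_iff_extension_weaklyMixing_general
    {G : Type*} [Group G] {Ω : Type*} [MeasurableSpace Ω]
    (P : Measure Ω) (X : G → Ω → ℝ)
    {H : Type*} [Group H] [TopologicalSpace H] [IsTopologicalGroup H] [PolishSpace H]
    (τ : G →* H) (hdense : DenseRange ⇑τ)
    {Ω' : Type*} [MeasurableSpace Ω'] (P' : Measure Ω') [IsProbabilityMeasure P']
    (Y : H → Ω' → ℝ) (hmeasY : ∀ h, Measurable (Y h)) (hstatY : Stationary P' Y)
    (hcontY : StochasticallyContinuous P' Y)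
    (hdist : procLaw P' (fun g => Y (τ g)) = procLaw P X) :
    WeaklyMixingProcess P X ↔ WeaklyMixingProcess P' Y := by
  have : IsProbabilityMeasure (procLaw P' Y) :=
    Measure.isProbabilityMeasure_map (measurable_pi_lambda _ hmeasY).aemeasurable
  have hshift := hstatY.measurePreserving_shiftMap hmeasY
  have hcont := hcontY.procLaw hmeasY
  rw [weaklyMixingProcess_iff, weaklyMixingProcess_iff, ← hdist, procLaw_comp hmeasY,
    Measure.map_prod_map _ _ (measurable_comp_right τ) (measurable_comp_right τ),
    ergodicSystem_map_prodMap_comp_iff τ hdense hshift hcont]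
  exact ergodicSystem_comp_iff_of_denseRange hdense fun A hA =>
    tendsto_measure_preimage_prodMap_shiftMap_symmDiff hshift hcont hA

/-- for any stochastically continuous extension `(H, τ, Y)` of a separable
in probability stationary `G`-process `X`, `X` is `G`-weakly mixing iff `Y` is
`H`-weakly mixing. -/
theorem weaklyMixing_iff_extension_weaklyMixing
    {G : Type*} [Group G] {Ω : Type*} [MeasurableSpace Ω]
    (P : Measure Ω) [IsProbabilityMeasure P] (X : G → Ω → ℝ)
    (hmeas : ∀ g, Measurable (X g)) (hstat : Stationary P X)
    (hsep : SeparableInProbability P X)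
    {H : Type*} [Group H] [TopologicalSpace H] [IsTopologicalGroup H] [PolishSpace H]
    (τ : G →* H) (hdense : DenseRange ⇑τ)
    {Ω' : Type*} [MeasurableSpace Ω'] (P' : Measure Ω') [IsProbabilityMeasure P']
    (Y : H → Ω' → ℝ) (hmeasY : ∀ h, Measurable (Y h)) (hstatY : Stationary P' Y)
    (hcontY : StochasticallyContinuous P' Y)
    (hdist : procLaw P' (fun g => Y (τ g)) = procLaw P X) :
    WeaklyMixingProcess P X ↔ WeaklyMixingProcess P' Y :=
  weaklyMixing_iff_extension_weaklyMixing_general P X τ hdense P' Y hmeasY hstatY hcontY hdist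

end Paper
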